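/- Let φ = φ₀(1+r) with φ₀(t) = c·exp(iμ₀t - σ₀²t²/2), c > 0, and r differentiable with 1+r(t) ≠ 0. Then the functional μ₀(φ;t) = [Re(φ(t))Im(φ'(t)) - Re(φ'(t))Im(φ(t))]/|φ(t)|² satisfies |μ₀(φ;t) - μ₀| ≤ |r'(t)|·(1+|r(t)|)/|1+r(t)|². -/

import Mathlib

/-
`muFun h t` is the imaginary part of the logarithmic derivative `h'/h`, so it is additive under
products. The Gaussian factor has logarithmic derivative `iμ₀ - σ₀²t` and contributes exactly `μ₀`;
the factor `1 + r` contributes `Im (r'/(1+r))`, of modulus at most `|r'|/|1+r|`.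
-/

open Complex Real

/-- The functional `μ₀(h;t) = [Re(h(t))Im(h'(t)) - Re(h'(t))Im(h(t))]/|h(t)|²`. -/
noncomputable def muFun (h : ℝ → ℂ) (t : ℝ) : ℝ :=
  ((h t).re * (deriv h t).im - (deriv h t).re * (h t).im) / ‖h t‖ ^ 2

lemma muFun_eq_im_deriv_div (h : ℝ → ℂ) (t : ℝ) : muFun h t = (deriv h t / h t).im := by
  rw [muFun, Complex.div_im, Complex.sq_norm, Complex.normSq_apply]
  ring

lemma abs_muFun_le (h : ℝ → ℂ) (t : ℝ) : |muFun h t| ≤ ‖deriv h t‖ / ‖h t‖ := by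
  rw [muFun_eq_im_deriv_div, ← norm_div]
  exact Complex.abs_im_le_norm _

lemma muFun_mul {f g : ℝ → ℂ} {t : ℝ} (hf : DifferentiableAt ℝ f t)
    (hg : DifferentiableAt ℝ g t) (hf0 : f t ≠ 0) (hg0 : g t ≠ 0) :
    muFun (f * g) t = muFun f t + muFun g t := by
  simp only [muFun_eq_im_deriv_div, deriv_mul hf hg, Pi.mul_apply, ← Complex.add_im]
  congr 1
  field_simp

lemma muFun_const_mul_cexp {g : ℝ → ℂ} {t : ℝ} (hg : DifferentiableAt ℝ g t) {c : ℂ}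
    (hc : c ≠ 0) : muFun (fun s => c * cexp (g s)) t = (deriv g t).im := by
  rw [muFun_eq_im_deriv_div, ((hg.hasDerivAt.cexp).const_mul c).deriv]
  congr 1
  field_simp [Complex.exp_ne_zero]

lemma muFun_gaussian {c : ℝ} (hc : c ≠ 0) (μ₀ σ₀ t : ℝ) :
    muFun (fun s : ℝ => (c : ℂ) * cexp (I * μ₀ * s - σ₀ ^ 2 * s ^ 2 / 2)) t = μ₀ := by
  have hexponent : HasDerivAt (fun s : ℝ => I * μ₀ * s - σ₀ ^ 2 * s ^ 2 / 2)
      (I * μ₀ - σ₀ ^ 2 * t) t := by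
    have hz := ((hasDerivAt_id (t : ℂ)).const_mul (I * μ₀)).sub
      (((hasDerivAt_pow 2 (t : ℂ)).const_mul ((σ₀ : ℂ) ^ 2)).div_const 2)
    exact (hz.congr_deriv (by ring)).comp_ofReal
  rw [muFun_const_mul_cexp hexponent.differentiableAt (by exact_mod_cast hc), hexponent.deriv]
  simp [← Complex.ofReal_pow]

lemma div_le_mul_one_add_div_sq {a b x : ℝ} (ha : 0 ≤ a) (hb : 0 < b) (hbx : b ≤ 1 + x) :
    a / b ≤ a * (1 + x) / b ^ 2 := by
  calc a / b = a * b / b ^ 2 := by field_simp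
    _ ≤ a * (1 + x) / b ^ 2 := by gcongr

theorem stmt7_general (c μ₀ σ₀ : ℝ) (hc : 0 < c)
    (r : ℝ → ℂ) (hr : Differentiable ℝ r)
    (φ : ℝ → ℂ)
    (hφ : ∀ s : ℝ, φ s =
      c * Complex.exp (Complex.I * μ₀ * s - σ₀ ^ 2 * s ^ 2 / 2) * (1 + r s))
    (t : ℝ) (hr0 : 1 + r t ≠ 0) :
    |muFun φ t - μ₀| ≤
      ‖deriv r t‖ * (1 + ‖r t‖) / ‖1 + r t‖ ^ 2 := by
  set G : ℝ → ℂ := fun s => (c : ℂ) * cexp (I * μ₀ * s - σ₀ ^ 2 * s ^ 2 / 2)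
  have hφG : φ = G * fun s => 1 + r s := funext hφ
  have hG : muFun G t = μ₀ := muFun_gaussian hc.ne' μ₀ σ₀ t
  have hGd : DifferentiableAt ℝ G t := by fun_prop
  have hG0 : G t ≠ 0 := mul_ne_zero (by exact_mod_cast hc.ne') (Complex.exp_ne_zero _)
  rw [hφG, muFun_mul hGd ((hr t).const_add 1) hG0 hr0, hG, add_sub_cancel_left]
  calc |muFun (fun s => 1 + r s) t| ≤ ‖deriv r t‖ / ‖1 + r t‖ := by
        simpa only [deriv_const_add] using abs_muFun_le (fun s => 1 + r s) t
    _ ≤ _ := div_le_mul_one_add_div_sq (norm_nonneg _) (norm_pos_iff.mpr hr0)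
        (by simpa using norm_add_le 1 (r t))

theorem stmt7 (c μ₀ σ₀ : ℝ) (hc : 0 < c) (hσ : 0 < σ₀)
    (r : ℝ → ℂ) (hr : Differentiable ℝ r)
    (φ : ℝ → ℂ)
    (hφ : ∀ s : ℝ, φ s =
      c * Complex.exp (Complex.I * μ₀ * s - σ₀ ^ 2 * s ^ 2 / 2) * (1 + r s))
    (t : ℝ) (hr0 : 1 + r t ≠ 0) :
    |muFun φ t - μ₀| ≤
      ‖deriv r t‖ * (1 + ‖r t‖) / ‖1 + r t‖ ^ 2 :=
  stmt7_general c μ₀ σ₀ hc r hr φ hφ t hr0
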